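/- Let g = W(∞), let M be a g-module satisfying the large annihilator condition for g^≤ = g^{−1} ⊕ g^0 (for each m ∈ M there is n with t_n ∩ g^≤ ⊆ Ann_g(m)). If M ≠ 0 then M^{g^{−1}} := {m ∈ M : ∂_j · m = 0 for all j} is nonzero. -/

import Mathlib

noncomputable section

open scoped TensorProduct

/-- The natural module V, a countable-dimensional vector space with basis ξ_i. -/
abbrev Vnat : Type := ℕ →₀ ℂ

/-- The infinite Grassmann algebra Λ(∞), realized as the exterior algebra of V. -/
abbrev Lam : Type := ExteriorAlgebra ℂ Vnat

/-- The odd generator ξ_i of Λ(∞). -/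
def xi (i : ℕ) : Lam := ExteriorAlgebra.ι ℂ (Finsupp.single i 1)

/-- The Grassmann monomial ξ_{i_1}⋯ξ_{i_k} for a finite set of indices i_1 < ⋯ < i_k. -/
def xiM (s : Finset ℕ) : Lam := ((s.sort (· ≤ ·)).map xi).prod

/-- The odd superderivation ∂_j of Λ(∞), realized as left contraction with the j-th
coordinate functional. -/
def del (j : ℕ) : Module.End ℂ Lam :=
  CliffordAlgebra.contractLeft (Q := (0 : QuadraticForm ℂ Vnat)) (Finsupp.lapply j)

/-- The element ξ^a ∂_j of W(∞), as an operator on Λ(∞). -/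
def op (a : Finset ℕ) (j : ℕ) : Module.End ℂ Lam :=
  (LinearMap.mulLeft ℂ (xiM a)) ∘ₗ del j

/-- The degree-k component W(∞)^k, spanned by the ξ^a∂_j with |a| = k+1. -/
def Wcomp (k : ℤ) : Submodule ℂ (Module.End ℂ Lam) :=
  Submodule.span ℂ {X | ∃ (a : Finset ℕ) (j : ℕ), (a.card : ℤ) = k + 1 ∧ X = op a j}

/-- W(∞), the span of all ξ^a∂_j inside End(Λ(∞)). -/
def Wspan : Submodule ℂ (Module.End ℂ Lam) :=
  Submodule.span ℂ {X | ∃ (a : Finset ℕ) (j : ℕ), X = op a j}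

/-- ξ^a∂_j as an element of W(∞). -/
def opW (a : Finset ℕ) (j : ℕ) : ↥Wspan :=
  ⟨op a j, Submodule.subset_span ⟨a, j, rfl⟩⟩

/-- ρ is a representation of the Lie superalgebra W(∞) on M: it intertwines the
super-bracket of homogeneous elements with the super-commutator of operators. -/
def IsSuperRep (M : Type) [AddCommGroup M] [Module ℂ M]
    (ρ : ↥Wspan →ₗ[ℂ] Module.End ℂ M) : Prop :=
  ∀ (i j : ℤ) (x y : Module.End ℂ Lam) (hx : x ∈ Wspan) (hy : y ∈ Wspan)
    (hxy : x ∘ₗ y - ((-1 : ℂ)) ^ (i * j) • (y ∘ₗ x) ∈ Wspan),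
    x ∈ Wcomp i → y ∈ Wcomp j →
    ρ ⟨x ∘ₗ y - ((-1 : ℂ)) ^ (i * j) • (y ∘ₗ x), hxy⟩
      = ρ ⟨x, hx⟩ * ρ ⟨y, hy⟩ - ((-1 : ℂ)) ^ (i * j) • (ρ ⟨y, hy⟩ * ρ ⟨x, hx⟩)

/-! The operators `∂_j` on a `W(∞)`-module pairwise anticommute and square to zero.
Starting from `m ≠ 0` killed by all `∂_j` with `j ≥ n`, go down through `j = n - 1, …, 0`,
replacing `m` by `∂_j m` whenever that is nonzero; each new vector is still killed by every `∂_k`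
with `k > j` (by anticommutation) and by `∂_j` itself (as `∂_j² = 0`), so the final vector is
nonzero and killed by all `∂_j`. -/

theorem exists_ne_zero_forall_eq_zero_of_anticomm {R M : Type*} [Semiring R] [AddCommGroup M]
    [Module R M] {D : ℕ → Module.End R M}
    (hsq : ∀ i, D i * D i = 0) (hanti : ∀ i j, D i * D j = -(D j * D i))
    {n : ℕ} {m : M} (hm : m ≠ 0) (hker : ∀ j, n ≤ j → D j m = 0) :
    ∃ m' : M, m' ≠ 0 ∧ ∀ j, D j m' = 0 := by
  induction n generalizing m with
  | zero => exact ⟨m, hm, fun j => hker j (Nat.zero_le j)⟩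
  | succ n ih =>
    by_cases hn : D n m = 0
    · refine ih hm fun j hj => ?_
      rcases hj.eq_or_lt with rfl | hlt
      · exact hn
      · exact hker j hlt
    · refine ih hn fun j hj => ?_
      rcases hj.eq_or_lt with rfl | hlt
      · exact LinearMap.congr_fun (hsq _) m
      · rw [← Module.End.mul_apply, hanti, LinearMap.neg_apply, Module.End.mul_apply,
          hker j hlt, map_zero, neg_zero]

theorem xiM_empty : xiM ∅ = 1 := by
  rw [xiM, Finset.sort_empty, List.map_nil, List.prod_nil]

theorem op_empty (j : ℕ) : op ∅ j = del j := by
  rw [op, xiM_empty, LinearMap.mulLeft_one, LinearMap.id_comp]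

theorem op_empty_mem_Wcomp (j : ℕ) : op ∅ j ∈ Wcomp (-1) :=
  Submodule.subset_span ⟨∅, j, by simp, rfl⟩

theorem del_comp_del_add (i j : ℕ) : del i ∘ₗ del j + del j ∘ₗ del i = 0 :=
  LinearMap.ext fun x => by
    rw [LinearMap.add_apply, LinearMap.comp_apply, LinearMap.comp_apply, del, del,
      CliffordAlgebra.contractLeft_comm, neg_add_cancel, LinearMap.zero_apply]

theorem IsSuperRep.mul_eq_neg_of_odd {M : Type} [AddCommGroup M] [Module ℂ M]
    {ρ : ↥Wspan →ₗ[ℂ] Module.End ℂ M} (hrep : IsSuperRep M ρ) {x y : ↥Wspan}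
    (hx : x.1 ∈ Wcomp (-1)) (hy : y.1 ∈ Wcomp (-1)) (hxy : x.1 ∘ₗ y.1 + y.1 ∘ₗ x.1 = 0) :
    ρ x * ρ y = -(ρ y * ρ x) := by
  have hsign : ((-1 : ℂ)) ^ ((-1 : ℤ) * (-1)) = -1 := by norm_num
  have hbracket : x.1 ∘ₗ y.1 - ((-1 : ℂ)) ^ ((-1 : ℤ) * (-1)) • (y.1 ∘ₗ x.1) = 0 := by
    refine LinearMap.ext fun v => ?_
    have hv := LinearMap.congr_fun hxy v
    simp only [LinearMap.add_apply, LinearMap.zero_apply] at hv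
    simp only [LinearMap.sub_apply, LinearMap.smul_apply, hsign, neg_one_smul, sub_neg_eq_add, hv,
      LinearMap.zero_apply]
  have h := hrep (-1) (-1) x y x.2 y.2 (hbracket ▸ Wspan.zero_mem) hx hy
  rw [show (⟨_, hbracket ▸ Wspan.zero_mem⟩ : ↥Wspan) = 0 from Subtype.ext hbracket, map_zero,
    hsign, neg_smul, one_smul, sub_neg_eq_add] at h
  exact eq_neg_of_add_eq_zero_left h.symm

/-- a nonzero W(∞)-module satisfying the large annihilator condition for
g^≤ = g^{−1} ⊕ g^0 has a nonzero vector annihilated by all ∂_j, i.e. M^{g^{−1}} ≠ 0. -/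
theorem stmt15 (M : Type) [AddCommGroup M] [Module ℂ M]
    (ρ : ↥Wspan →ₗ[ℂ] Module.End ℂ M) (hrep : IsSuperRep M ρ)
    (hlac : ∀ m : M, ∃ n : ℕ, ∀ (a : Finset ℕ) (j : ℕ),
      n ≤ j → (∀ i ∈ a, n ≤ i) → a.card ≤ 1 → ρ (opW a j) m = 0)
    (hnz : ∃ m : M, m ≠ 0) :
    ∃ m : M, m ≠ 0 ∧ ∀ j : ℕ, ρ (opW ∅ j) m = 0 := by
  have hanti (i j : ℕ) : ρ (opW ∅ i) * ρ (opW ∅ j) = -(ρ (opW ∅ j) * ρ (opW ∅ i)) :=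
    hrep.mul_eq_neg_of_odd (op_empty_mem_Wcomp i) (op_empty_mem_Wcomp j)
      (by simp only [opW, op_empty, del_comp_del_add])
  have : IsAddTorsionFree (Module.End ℂ M) := .of_isTorsionFree ℂ _
  have hsq (i : ℕ) : ρ (opW ∅ i) * ρ (opW ∅ i) = 0 := self_eq_neg.mp (hanti i i)
  obtain ⟨m, hm⟩ := hnz
  obtain ⟨n, hn⟩ := hlac m
  exact exists_ne_zero_forall_eq_zero_of_anticomm hsq hanti hm
    fun j hj => hn ∅ j hj (by simp) (by simp)
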